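/- arXiv:2109.07321 — 2 statements merged into one kernel-verified Lean document; each statement's English description precedes it below -/
import Mathlib

section
/- Let σ be a finite set with each x ∈ σ correct with probability p(x), let the reference match have deterministic size m > 0, and let σ' = σ ∪ {Δ} with Δ ∉ σ correct with probability q. Define E[F(σ)] = 2·(Σ_{x∈σ} p(x))/(|σ| + m) and E[F(σ')] = 2·(Σ_{x∈σ} p(x) + q)/(|σ| + 1 + m). Then E[F(σ)] ≤ E[F(σ')] if and only if (1/2)·E[F(σ)] ≤ q. -/
/-- The mediant `(a + c) / (b + d)` lies between `a / b` and `c / d`. -/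
theorem div_le_add_div_add_iff {K : Type*} [Field K] [LinearOrder K] [IsStrictOrderedRing K]
    {a b c d : K} (hb : 0 < b) (hd : 0 < d) :
    a / b ≤ (a + c) / (b + d) ↔ a / b ≤ c / d := by
  rw [div_le_div_iff₀ hb (add_pos hb hd), div_le_div_iff₀ hb hd]
  constructor <;> intro h <;> linarith

theorem expected_fmeasure_iff_general {α : Type*}
    (σ : Finset α) (p : α → ℝ) (q : ℝ) (m : ℕ) (hm : 0 < m) :
    (2 * (∑ x ∈ σ, p x) / (σ.card + m) ≤
        2 * ((∑ x ∈ σ, p x) + q) / (σ.card + 1 + m) ↔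
      (1 / 2) * (2 * (∑ x ∈ σ, p x) / (σ.card + m)) ≤ q) := by
  set S := ∑ x ∈ σ, p x
  have hsize : (0 : ℝ) < σ.card + m := by positivity
  have hsize' : (σ.card + 1 + m : ℝ) = (σ.card + m) + 1 := by ring
  rw [hsize', mul_div_assoc, mul_div_assoc, mul_le_mul_iff_right₀ two_pos,
    one_div, inv_mul_cancel_left₀ two_ne_zero]
  simpa only [div_one] using div_le_add_div_add_iff (a := S) (c := q) hsize one_pos

theorem expected_fmeasure_iff {α : Type*} [DecidableEq α]
    (σ : Finset α) (p : α → ℝ) (q : ℝ) (m : ℕ) (hm : 0 < m)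
    (hp : ∀ x ∈ σ, p x ∈ Set.Icc (0 : ℝ) 1) (hq : q ∈ Set.Icc (0 : ℝ) 1)
    (Δ : α) (hΔ : Δ ∉ σ) :
    (2 * (∑ x ∈ σ, p x) / (σ.card + m) ≤
        2 * ((∑ x ∈ σ, p x) + q) / (σ.card + 1 + m) ↔
      (1 / 2) * (2 * (∑ x ∈ σ, p x) / (σ.card + m)) ≤ q) :=
  expected_fmeasure_iff_general σ p q m hm
end

section
/- Let σ and σ' be nonempty finite sets with σ ⊆ σ' and Δ = σ' \ σ nonempty, and σ* a nonempty finite reference set. If P(Δ) < (1/2)·F(σ), then F(σ') < F(σ), i.e., adding Δ strictly decreases the f-measure, where P(Δ) = |Δ ∩ σ*|/|Δ| and F(A) = 2·|A ∩ σ*|/(|A| + |σ*|). -/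
/-! Write `a = |σ ∩ σ*|`, `c = |σ| + |σ*|`, `b = |Δ ∩ σ*|`, `d = |Δ|`. Since `Δ` is disjoint from `σ`,
`F(σ) = 2 a / c` and `F(σ') = 2 (a + b) / (c + d)`, and the hypothesis says `b / d < a / c`. The
mediant `(a + b) / (c + d)` lies strictly between `b / d` and `a / c`, hence below `a / c`. -/

theorem add_div_add_lt_div_of_div_lt {K : Type*} [Field K] [LinearOrder K] [IsStrictOrderedRing K]
    {a b c d : K} (hc : 0 < c) (hd : 0 < d) (h : b / d < a / c) :
    (a + b) / (c + d) < a / c := by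
  rw [div_lt_div_iff₀ hd hc] at h
  rw [div_lt_div_iff₀ (add_pos hc hd) hc]
  linarith

namespace Finset

variable {α : Type*} [DecidableEq α]

theorem card_inter_eq_card_inter_add_card_sdiff_inter {s t : Finset α} (hst : s ⊆ t)
    (u : Finset α) : #(t ∩ u) = #(s ∩ u) + #((t \ s) ∩ u) := by
  rw [show (t \ s) ∩ u = (t ∩ u) \ (s ∩ u) from inf_sdiff_distrib_right t s u, add_comm,
    card_sdiff_add_card_eq_card (inter_subset_inter_right hst)]

end Finset

open Finset in
theorem fmeasure_strict_decrease_general {α : Type*} [DecidableEq α]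
    (σ σ' σstar : Finset α)
    (hsub : σ ⊆ σ') (hΔ : (σ' \ σ).Nonempty)
    (hP : (((σ' \ σ) ∩ σstar).card : ℚ) / (σ' \ σ).card <
      (1 / 2) * (2 * ((σ ∩ σstar).card : ℚ) / (σ.card + σstar.card))) :
    2 * ((σ' ∩ σstar).card : ℚ) / (σ'.card + σstar.card) <
      2 * ((σ ∩ σstar).card : ℚ) / (σ.card + σstar.card) := by
  rw [mul_div_assoc, ← mul_assoc, one_div_mul_cancel two_ne_zero, one_mul] at hP
  have hΔpos : (0 : ℚ) < #(σ' \ σ) := by exact_mod_cast hΔ.card_pos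
  -- if `σ` and `σstar` were both empty, the right-hand side of `hP` would be `0 / 0 = 0`
  have hσpos : (0 : ℚ) < #σ + #σstar := by
    refine lt_of_le_of_ne (by positivity) fun h ↦ ?_
    rw [← h, div_zero] at hP
    exact hP.not_ge (by positivity)
  rw [mul_div_assoc, mul_div_assoc, card_inter_eq_card_inter_add_card_sdiff_inter hsub,
    ← card_sdiff_add_card_eq_card hsub, Nat.cast_add, Nat.cast_add,
    add_comm (#(σ' \ σ) : ℚ), add_right_comm]
  exact mul_lt_mul_of_pos_left (add_div_add_lt_div_of_div_lt hσpos hΔpos hP) two_pos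

theorem fmeasure_strict_decrease {α : Type*} [DecidableEq α]
    (σ σ' σstar : Finset α) (hσ : σ.Nonempty) (hσ' : σ'.Nonempty)
    (hsub : σ ⊆ σ') (hΔ : (σ' \ σ).Nonempty) (hstar : σstar.Nonempty)
    (hP : (((σ' \ σ) ∩ σstar).card : ℚ) / (σ' \ σ).card <
      (1 / 2) * (2 * ((σ ∩ σstar).card : ℚ) / (σ.card + σstar.card))) :
    2 * ((σ' ∩ σstar).card : ℚ) / (σ'.card + σstar.card) <
      2 * ((σ ∩ σstar).card : ℚ) / (σ.card + σstar.card) :=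
  fmeasure_strict_decrease_general σ σ' σstar hsub hΔ hP
end
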